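/- arXiv:1408.0056 — 3 statements merged into one kernel-verified Lean document; each statement's English description precedes it below -/
import Mathlib

section
/- If a right R-module M has finite couniserial dimension, i.e., c.u.dim(M) = n for a natural number n, then M has finite uniform dimension and u.dim(M) ≤ n. -/
universe u v w

/-- A module is *uniform* if it is nonzero and any two nonzero submodules intersect
nontrivially. -/
def IsUniformModule (R : Type u) [Ring R] (M : Type v) [AddCommGroup M] [Module R M] : Prop :=
  Nontrivial M ∧ ∀ N₁ N₂ : Submodule R M, N₁ ≠ ⊥ → N₂ ≠ ⊥ → N₁ ⊓ N₂ ≠ ⊥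

/-- The classes `ζ_α`, defined by transfinite induction: `ζ_1` is the class of uniform
modules, and for `α > 1`, `M ∈ ζ_α` iff every nonzero submodule `N` of `M` with `N ≇ M`
lies in `ζ_β` for some `β < α`. -/
def ModuleZeta (R : Type u) [Ring R] (α : Ordinal.{v}) (M : Type v) [AddCommGroup M]
    [Module R M] : Prop :=
  (α = 1 ∧ IsUniformModule R M) ∨
    (1 < α ∧ ∀ N : Submodule R M, N ≠ ⊥ → ¬ Nonempty (N ≃ₗ[R] M) →
      ∃ β, ∃ _ : β < α, ModuleZeta R β N)
termination_by α

/-- A module has couniserial dimension iff it lies in `ζ_α` for some ordinal `α`. -/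
def HasCUDim (R : Type u) [Ring R] (M : Type v) [AddCommGroup M] [Module R M] : Prop :=
  ∃ α : Ordinal.{v}, ModuleZeta R α M

open Classical in
/-- The couniserial dimension of a module: the least `α` with `M ∈ ζ_α`, with the
convention that the zero module has couniserial dimension `0`. -/
noncomputable def cuDim (R : Type u) [Ring R] (M : Type v) [AddCommGroup M] [Module R M] :
    Ordinal.{v} :=
  if Subsingleton M then 0 else sInf {α | ModuleZeta R α M}

/-- A submodule is *essential* if it meets every nonzero submodule nontrivially. -/
def IsEssentialSubmodule (R : Type u) [Ring R] {M : Type v} [AddCommGroup M] [Module R M]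
    (N : Submodule R M) : Prop :=
  ∀ K : Submodule R M, K ≠ ⊥ → N ⊓ K ≠ ⊥

/-- A module is *indecomposable* if it is nonzero and is not an (internal) direct sum of two
nonzero submodules. -/
def IsIndecomposableModule (R : Type u) [Ring R] (M : Type v) [AddCommGroup M]
    [Module R M] : Prop :=
  Nontrivial M ∧ ∀ A B : Submodule R M, IsCompl A B → A = ⊥ ∨ B = ⊥

/-- A module is *coHopfian* if it is not isomorphic to a proper submodule of itself. -/
def IsCoHopfianModule (R : Type u) [Ring R] (M : Type v) [AddCommGroup M] [Module R M] : Prop :=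
  ∀ N : Submodule R M, Nonempty (M ≃ₗ[R] N) → N = ⊤

/-- A module is *fully coHopfian* if every submodule is coHopfian. -/
def IsFullyCoHopfianModule (R : Type u) [Ring R] (M : Type v) [AddCommGroup M]
    [Module R M] : Prop :=
  ∀ N : Submodule R M, IsCoHopfianModule R N

/-- A module `N` has the *cancellation property* if `N ⊕ A ≅ N ⊕ B` implies `A ≅ B`. -/
def HasCancellation (R : Type u) [Ring R] (N : Type v) [AddCommGroup N] [Module R N] : Prop :=
  ∀ (A B : Type v) [AddCommGroup A] [Module R A] [AddCommGroup B] [Module R B],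
    Nonempty ((N × A) ≃ₗ[R] (N × B)) → Nonempty (A ≃ₗ[R] B)

/-- A module is *Dedekind finite* if it is not isomorphic to a proper direct summand of
itself. -/
def IsDedekindFiniteModule (R : Type u) [Ring R] (M : Type v) [AddCommGroup M]
    [Module R M] : Prop :=
  ∀ A B : Submodule R M, IsCompl A B → Nonempty (M ≃ₗ[R] A) → B = ⊥

/-- A ring is *semiprime* if it has no nonzero nilpotent two-sided ideal; equivalently,
`a R a = 0` implies `a = 0`. -/
def IsSemiprimeRing (R : Type u) [Ring R] : Prop :=
  ∀ a : R, (∀ x : R, a * x * a = 0) → a = 0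

/-- An ideal is an *annihilator ideal* if it is the annihilator of a subset of the ring. -/
def IsAnnihilatorIdeal (R : Type u) [Ring R] (I : Ideal R) : Prop :=
  ∃ S : Set R, (I : Set R) = {x : R | ∀ s ∈ S, x * s = 0}

/-- A module has *uniform dimension `n`* if it contains `n` independent uniform submodules
whose direct sum is essential. -/
def HasFiniteUniformDim (R : Type u) [Ring R] (M : Type v) [AddCommGroup M] [Module R M]
    (n : ℕ) : Prop :=
  ∃ U : Fin n → Submodule R M, iSupIndep U ∧ (∀ i, IsUniformModule R (U i)) ∧
    IsEssentialSubmodule R (⨆ i, U i)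

/-- A ring is *Goldie* if it has the ascending chain condition on annihilator ideals and
finite uniform dimension as a module over itself. -/
def IsGoldieRing (R : Type u) [Ring R] : Prop :=
  (∀ f : ℕ → Ideal R, (∀ n, IsAnnihilatorIdeal R (f n)) → Monotone f →
      ∃ n, ∀ k, n ≤ k → f k = f n) ∧
    ∃ n : ℕ, HasFiniteUniformDim R R n


/-!
Every nonzero submodule of a module with couniserial dimension contains a uniform submodule:
take a nonzero submodule `Q` of it lying in the least possible class `ζ_α`. If `Q` is not
uniform, minimality forces every nonzero submodule of `Q` to be isomorphic to `Q`, so `Q` is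
Noetherian, and a Noetherian module contains a uniform submodule.

If `c.u.dim M ≤ n`, then `M` has no `n + 1` independent nonzero submodules. Shrink them to
uniform submodules `V₀, …, Vₙ` and put `C = V₁ ⊕ ⋯ ⊕ Vₙ`. If `C ≇ M`, then `c.u.dim C ≤ n - 1`
and induction applies to `V₁, …, Vₙ`. If `C ≅ M`, then `C` is a direct sum of `n` uniform
modules containing `n + 1` independent nonzero submodules, which Goldie's bound on uniform
dimension forbids. Hence a maximal independent family of uniform submodules of `M` has at most
`n` members, and its sum is essential.
-/

section Lattice

variable {α : Type*} [CompleteLattice α]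

def IsEssentialIn (a b : α) : Prop :=
  a ≤ b ∧ ∀ k ≤ b, k ≠ ⊥ → ¬Disjoint a k

def IsUniformElement (u : α) : Prop :=
  u ≠ ⊥ ∧ ∀ x ≤ u, x ≠ ⊥ → IsEssentialIn x u

theorem isEssentialIn_refl (a : α) : IsEssentialIn a a :=
  ⟨le_rfl, fun _ hk hk0 hd => hk0 (hd.symm.eq_bot_of_le hk)⟩

theorem IsUniformElement.not_disjoint {u x y : α} (hu : IsUniformElement u) (hx : x ≤ u)
    (hy : y ≤ u) (hx0 : x ≠ ⊥) (hy0 : y ≠ ⊥) : ¬Disjoint x y :=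
  (hu.2 x hx hx0).2 y hy hy0

theorem IsUniformElement.of_le {u x : α} (hu : IsUniformElement u) (hxu : x ≤ u) (hx0 : x ≠ ⊥) :
    IsUniformElement x :=
  ⟨hx0, fun _ hyx hy0 =>
    ⟨hyx, fun _ hkx hk0 => hu.not_disjoint (hyx.trans hxu) (hkx.trans hxu) hy0 hk0⟩⟩

theorem IsUniformElement.not_disjoint_inf {u a b : α} (hu : IsUniformElement u)
    (ha : ¬Disjoint u a) (hb : ¬Disjoint u b) : ¬Disjoint u (a ⊓ b) := by
  have := hu.not_disjoint inf_le_left inf_le_left (mt disjoint_iff.2 ha) (mt disjoint_iff.2 hb)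
  rwa [disjoint_iff, ← inf_inf_distrib_left, ← disjoint_iff] at this

theorem IsUniformElement.map_orderIso {β : Type*} [CompleteLattice β] (e : α ≃o β) {u : α}
    (hu : IsUniformElement u) : IsUniformElement (e u) := by
  refine ⟨by simpa using hu.1, fun x hx hx0 => ⟨hx, fun k hk hk0 => ?_⟩⟩
  rw [← e.apply_symm_apply x, ← e.apply_symm_apply k, disjoint_map_orderIso_iff]
  exact hu.not_disjoint (e.symm_apply_le.2 hx) (e.symm_apply_le.2 hk) (by simpa using hx0)
    (by simpa using hk0)

theorem OrderIso.isUniformElement_iff {β : Type*} [CompleteLattice β] (e : α ≃o β) {u : α} :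
    IsUniformElement (e u) ↔ IsUniformElement u :=
  ⟨fun h => by simpa using h.map_orderIso e.symm, fun h => h.map_orderIso e⟩

theorem Set.Iic.isUniformElement_top_iff {a : α} :
    IsUniformElement (⊤ : Set.Iic a) ↔ IsUniformElement a := by
  simp only [IsUniformElement, IsEssentialIn, Set.Iic.disjoint_iff, ne_eq, Subtype.ext_iff,
    Set.Iic.coe_top, Set.Iic.coe_bot, Subtype.forall, Set.mem_Iic, le_top, true_and, true_implies]
  exact and_congr_right fun _ =>
    ⟨fun h x hx hx0 => ⟨hx, fun k hk hk0 => h x hx hx0 k hk hk0⟩,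
      fun h x hx hx0 k hk hk0 => (h x hx hx0).2 k hk hk0⟩

theorem iSup_fin_succ {n : ℕ} (f : Fin (n + 1) → α) : ⨆ i, f i = f 0 ⊔ ⨆ i : Fin n, f i.succ :=
  le_antisymm
    (iSup_le fun i => Fin.cases le_sup_left
      (fun j => le_sup_of_le_right (le_iSup (fun i : Fin n => f i.succ) j)) i)
    (sup_le (le_iSup f 0) (iSup_le fun j => le_iSup f j.succ))

section Modular

variable [IsModularLattice α]

theorem IsEssentialIn.of_sup_disjoint {a w c' c : α} (h : IsEssentialIn (a ⊔ w) c)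
    (hw : w ≤ c') (hc' : c' ≤ c) (hac' : Disjoint a c') : IsEssentialIn w c' := by
  refine ⟨hw, fun k hk hk0 hwk => h.2 k (hk.trans hc') hk0 (disjoint_iff.2 ?_)⟩
  have hproj : (a ⊔ w) ⊓ c' = w := by
    rw [sup_comm, sup_inf_assoc_of_le a hw, hac'.eq_bot, sup_bot_eq]
  rw [← inf_eq_right.2 hk, ← inf_assoc, hproj, hwk.eq_bot]

theorem IsEssentialIn.inf_sup_ne_bot {a c' c x : α} (h : IsEssentialIn (a ⊔ c') c) (hx : x ≤ c)
    (hx0 : x ≠ ⊥) (hax : Disjoint a x) : c' ⊓ (a ⊔ x) ≠ ⊥ := by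
  intro h0
  have hproj : (a ⊔ c') ⊓ (a ⊔ x) = a := by
    rw [sup_inf_assoc_of_le c' le_sup_left, h0, sup_bot_eq]
  refine h.2 x hx hx0 (disjoint_iff.2 (le_bot_iff.1 ?_))
  calc (a ⊔ c') ⊓ x ≤ a ⊓ x :=
        le_inf ((inf_le_inf_left _ le_sup_right).trans hproj.le) inf_le_right
    _ = ⊥ := hax.eq_bot

theorem iSupIndep.disjoint_sup_iSup_ne {ι : Type*} {v : ι → α} {a : α} (hv : iSupIndep v)
    (ha : Disjoint a (⨆ i, v i)) (j : ι) : Disjoint (v j) (a ⊔ ⨆ (i) (_ : i ≠ j), v i) := by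
  rw [sup_comm]
  exact (hv j).disjoint_sup_right_of_disjoint_sup_left
    (ha.mono_right (sup_le (le_iSup v j) (iSup₂_le fun i _ => le_iSup v i))).symm

theorem iSupIndep.inf_sup {ι : Type*} {v : ι → α} {a c : α} (hv : iSupIndep v)
    (ha : Disjoint a (⨆ i, v i)) (hac : Disjoint a c) : iSupIndep fun i => c ⊓ (a ⊔ v i) := by
  intro j
  refine Disjoint.mono_right (iSup₂_le fun i hi => inf_le_right.trans
    (sup_le_sup_left (le_iSup₂ (f := fun i (_ : i ≠ j) => v i) i hi) a)) ?_
  rw [disjoint_iff, inf_assoc, sup_inf_assoc_of_le _ le_sup_left,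
    (hv.disjoint_sup_iSup_ne ha j).eq_bot, sup_bot_eq, inf_comm, hac.eq_bot]

theorem iSupIndep.fin_cons {n : ℕ} {v : Fin n → α} {a : α} (hv : iSupIndep v)
    (ha : Disjoint a (⨆ i, v i)) : iSupIndep (Fin.cons a v : Fin (n + 1) → α) := by
  intro j
  cases j using Fin.cases with
  | zero =>
    refine ha.mono_right (iSup₂_le fun i hi => ?_)
    cases i using Fin.cases with
    | zero => exact absurd rfl hi
    | succ i => exact le_iSup v i
  | succ j =>
    refine (hv.disjoint_sup_iSup_ne ha j).mono_right (iSup₂_le fun i hi => ?_)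
    cases i using Fin.cases with
    | zero => exact le_sup_left
    | succ i => exact le_sup_of_le_right (le_iSup₂_of_le i (fun h => hi (h ▸ rfl)) le_rfl)

theorem exists_isUniformElement_le [WellFoundedGT α] {a : α} (ha : a ≠ ⊥) :
    ∃ u ≤ a, IsUniformElement u := by
  by_contra! h
  have split : ∀ y ≤ a, y ≠ ⊥ → ∃ x₁ ≤ y, ∃ x₂ ≤ y, x₁ ≠ ⊥ ∧ x₂ ≠ ⊥ ∧ Disjoint x₁ x₂ := by
    intro y hy hy0
    have := h y hy
    simp only [IsUniformElement, IsEssentialIn, not_and, not_forall, not_not] at this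
    obtain ⟨x₁, hx₁, hx₁0, hsplit⟩ := this hy0
    obtain ⟨x₂, hx₂, hx₂0, hd⟩ := hsplit hx₁
    exact ⟨x₁, hx₁, x₂, hx₂, hx₁0, hx₂0, hd⟩
  -- take `x` maximal among the elements that are not essential in `a`; splitting its witness `y`
  -- would enlarge it
  obtain ⟨x, hx⟩ := WellFoundedGT.exists_maximal ‹_›
    {x | x ≤ a ∧ ∃ y ≤ a, y ≠ ⊥ ∧ Disjoint x y} ⟨⊥, bot_le, a, le_rfl, ha, disjoint_bot_left⟩
  obtain ⟨hxa, y, hya, hy0, hxy⟩ := hx.prop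
  obtain ⟨x₁, hx₁, x₂, hx₂, hx₁0, hx₂0, hd⟩ := split y hya hy0
  have hle : x ⊔ x₁ ≤ x := hx.le_of_ge ⟨sup_le hxa (hx₁.trans hya), x₂, hx₂.trans hya, hx₂0,
    hd.disjoint_sup_left_of_disjoint_sup_right (hxy.mono_right (sup_le hx₁ hx₂))⟩ le_sup_left
  exact hx₁0 ((hxy.mono_right hx₁).symm.eq_bot_of_le (le_sup_right.trans hle))

theorem exists_iSupIndep_isUniformElement_isEssentialIn_top {n : ℕ}
    (huni : ∀ a : α, a ≠ ⊥ → ∃ u ≤ a, IsUniformElement u)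
    (hbound : ∀ v : Fin (n + 1) → α, (∀ i, v i ≠ ⊥) → ¬iSupIndep v) :
    ∃ m ≤ n, ∃ u : Fin m → α,
      iSupIndep u ∧ (∀ i, IsUniformElement (u i)) ∧ IsEssentialIn (⨆ i, u i) ⊤ := by
  let S : Set ℕ := {k | ∃ u : Fin k → α, iSupIndep u ∧ ∀ i, IsUniformElement (u i)}
  have hS : ∀ k ∈ S, k ≤ n := by
    rintro k ⟨u, hu, huu⟩
    by_contra! hk
    exact hbound (u ∘ Fin.castLE hk) (fun i => (huu _).1) (hu.comp (Fin.castLE_injective hk))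
  have hS0 : 0 ∈ S := ⟨Fin.elim0, iSupIndep_subsingleton _, fun i => i.elim0⟩
  obtain ⟨u, hu, huu⟩ := Nat.sSup_mem ⟨0, hS0⟩ ⟨n, hS⟩
  refine ⟨sSup S, csSup_le ⟨0, hS0⟩ hS, u, hu, huu, le_top, fun k _ hk0 hd => ?_⟩
  obtain ⟨a, hak, ha⟩ := huni k hk0
  have hmem : sSup S + 1 ∈ S :=
    ⟨Fin.cons a u, hu.fin_cons (hd.symm.mono_left hak), Fin.forall_fin_succ.2 ⟨ha, huu⟩⟩
  exact (le_csSup ⟨n, hS⟩ hmem).not_gt (Nat.lt_succ_self _)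

variable [IsCompactlyGenerated α]

theorem exists_disjoint_isEssentialIn_sup {a b c : α} (hac : a ≤ c) (hbc : b ≤ c)
    (hab : Disjoint a b) :
    ∃ c', b ≤ c' ∧ c' ≤ c ∧ Disjoint a c' ∧ IsEssentialIn (a ⊔ c') c := by
  obtain ⟨c', hbc', hmax⟩ := zorn_le_nonempty₀ {x | x ≤ c ∧ Disjoint a x}
    (fun s hs hchain _ _ => ⟨sSup s, ⟨sSup_le fun x hx => (hs hx).1,
      hchain.directedOn.disjoint_sSup_right.2 fun x hx => (hs hx).2⟩, fun _ => le_sSup⟩)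
    b ⟨hbc, hab⟩
  obtain ⟨hc'c, hac'⟩ := hmax.prop
  refine ⟨c', hbc', hc'c, hac', sup_le hac hc'c, fun k hk hk0 hd => hk0 ?_⟩
  have hkc' : k ≤ c' := le_sup_right.trans (hmax.le_of_ge
    ⟨sup_le hc'c hk, hac'.disjoint_sup_right_of_disjoint_sup_left hd⟩ le_sup_left)
  exact hd.symm.eq_bot_of_le (hkc'.trans le_sup_right)

theorem iSupIndep.biSup_inf_biSup {ι : Type*} {v : ι → α} (hv : iSupIndep v) (s t : Set ι) :
    (⨆ i ∈ s, v i) ⊓ (⨆ i ∈ t, v i) = ⨆ i ∈ s ∩ t, v i := by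
  conv_lhs => rw [← Set.inter_union_sdiff s t, iSup_union]
  rw [sup_inf_assoc_of_le _ (biSup_mono fun _ h => h.2),
    (hv.disjoint_biSup_biSup Set.disjoint_sdiff_left).eq_bot, sup_bot_eq]

theorem IsUniformElement.exists_disjoint_iSup_ne {ι : Type*} [Finite ι] [Nonempty ι] {u : α}
    {v : ι → α} (hu : IsUniformElement u) (hv : iSupIndep v) :
    ∃ i, Disjoint u (⨆ (j) (_ : j ≠ i), v j) := by
  classical
  by_contra! h
  have key : ∀ s : Finset ι, ¬Disjoint u (⨆ j ∈ (↑s : Set ι)ᶜ, v j) := by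
    intro s
    induction s using Finset.induction_on with
    | empty =>
      obtain ⟨i⟩ := ‹Nonempty ι›
      exact fun hd => h i (hd.mono_right (iSup₂_le fun j _ => le_iSup₂_of_le j (by simp) le_rfl))
    | insert i s _ ih =>
      have hi := hv.biSup_inf_biSup {i}ᶜ (↑s)ᶜ
      simp only [Set.mem_compl_singleton_iff, ← Set.compl_union, Set.singleton_union] at hi
      rw [Finset.coe_insert, ← hi]
      exact hu.not_disjoint_inf (h i) ih
  have := Fintype.ofFinite ι
  simpa using key Finset.univ

theorem not_iSupIndep_of_isEssentialIn_iSup : ∀ {n : ℕ} {c : α} {u : Fin n → α}, iSupIndep u →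
    (∀ i, IsUniformElement (u i)) → IsEssentialIn (⨆ i, u i) c →
    ∀ {v : Fin (n + 1) → α}, (∀ i, v i ≠ ⊥) → (∀ i, v i ≤ c) → ¬iSupIndep v
  | 0, _, _, _, _, hc, v, hv0, hvc, _ =>
    hc.2 (v 0) (hvc 0) (hv0 0) (by rw [iSup_of_empty]; exact disjoint_bot_left)
  | n + 1, c, u, hu, huu, hc, v, hv0, hvc, hv => by
    obtain ⟨i, hi⟩ := (huu 0).exists_disjoint_iSup_ne hv
    rw [iSup_fin_succ] at hc
    have huw : Disjoint (u 0) (⨆ j : Fin n, u j.succ) :=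
      (hu 0).mono_right (iSup_le fun j => le_iSup₂_of_le j.succ (Fin.succ_ne_zero j) le_rfl)
    -- split off a complement `c'` of `u 0` containing the other `u j`
    obtain ⟨c', hwc', hc'c, hdc', hess⟩ :=
      exists_disjoint_isEssentialIn_sup (le_sup_left.trans hc.1) (le_sup_right.trans hc.1) huw
    let v' := v ∘ i.succAbove
    have hv' : Disjoint (u 0) (⨆ j, v' j) :=
      hi.mono_right (iSup_le fun j =>
        le_iSup₂_of_le (f := fun j (_ : j ≠ i) => v j) _ (Fin.succAbove_ne i j) le_rfl)
    -- project the remaining `v j` into `c'` along `u 0`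
    exact not_iSupIndep_of_isEssentialIn_iSup (hu.comp (Fin.succ_injective _)) (fun j => huu _)
      (hc.of_sup_disjoint hwc' hc'c hdc') (v := fun j => c' ⊓ (u 0 ⊔ v' j))
      (fun j => hess.inf_sup_ne_bot (hvc _) (hv0 _) (hv'.mono_right (le_iSup v' j)))
      (fun _ => inf_le_left) ((hv.comp Fin.succAbove_right_injective).inf_sup hv' hdc')

end Modular

end Lattice

section Module

variable {R : Type u} [Ring R] {M : Type v} [AddCommGroup M] [Module R M]

theorem isUniformModule_iff_isUniformElement_top :
    IsUniformModule R M ↔ IsUniformElement (⊤ : Submodule R M) := by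
  have hnt : Nontrivial M ↔ (⊤ : Submodule R M) ≠ ⊥ :=
    ⟨fun _ => top_ne_bot, fun h => (Submodule.nontrivial_iff R).1 (nontrivial_of_ne _ _ h)⟩
  simp only [IsUniformModule, IsUniformElement, IsEssentialIn, hnt, le_top, true_and,
    forall_const, disjoint_iff, ne_eq]
  exact and_congr_right fun _ =>
    ⟨fun h x hx k hk => h x k hx hk, fun h x k hx hk => h x hx k hk⟩

theorem isUniformModule_submodule_iff {P : Submodule R M} :
    IsUniformModule R P ↔ IsUniformElement P := by
  rw [isUniformModule_iff_isUniformElement_top, ← P.mapIic.isUniformElement_iff, OrderIso.map_top,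
    Set.Iic.isUniformElement_top_iff]

theorem IsUniformModule.of_equiv {M' : Type*} [AddCommGroup M'] [Module R M'] (e : M ≃ₗ[R] M')
    (h : IsUniformModule R M) : IsUniformModule R M' := by
  rw [isUniformModule_iff_isUniformElement_top] at h ⊢
  simpa using h.map_orderIso (Submodule.orderIsoMapComap e)

theorem Submodule.map_ne_bot_of_injective {M' : Type*} [AddCommGroup M'] [Module R M']
    {f : M →ₗ[R] M'} (hf : Function.Injective f) {p : Submodule R M} (hp : p ≠ ⊥) :
    p.map f ≠ ⊥ :=
  (Submodule.map_injective_of_injective hf).ne_iff' (Submodule.map_bot f) |>.2 hp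

theorem ModuleZeta.one_le {α : Ordinal.{v}} (h : ModuleZeta R α M) : 1 ≤ α := by
  rw [ModuleZeta] at h
  rcases h with ⟨rfl, -⟩ | ⟨h1, -⟩
  exacts [le_rfl, h1.le]

theorem ModuleZeta.of_equiv {M' : Type v} [AddCommGroup M'] [Module R M'] {α : Ordinal.{v}}
    (e : M ≃ₗ[R] M') (h : ModuleZeta R α M) : ModuleZeta R α M' := by
  induction α using WellFoundedLT.induction generalizing M M' with
  | _ α ih =>
  rw [ModuleZeta] at h ⊢
  refine h.imp (And.imp_right (IsUniformModule.of_equiv e))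
    (And.imp_right fun hsub N' hN' hiso => ?_)
  let eN := e.symm.submoduleMap N'
  obtain ⟨β, hβ, hN⟩ := hsub _ (by simpa using hN') fun ⟨g⟩ => hiso ⟨(eN.trans g).trans e⟩
  exact ⟨β, hβ, ih β hβ eN.symm hN⟩

theorem ModuleZeta.exists_le_submodule {α : Ordinal.{v}} (h : ModuleZeta R α M)
    {Q : Submodule R M} (hQ : Q ≠ ⊥) : ∃ β ≤ α, ModuleZeta R β Q := by
  have h' := h
  rw [ModuleZeta] at h'
  rcases h' with ⟨rfl, hu⟩ | ⟨-, hsub⟩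
  · refine ⟨1, le_rfl, ?_⟩
    rw [ModuleZeta]
    exact Or.inl ⟨rfl, isUniformModule_submodule_iff.2
      ((isUniformModule_iff_isUniformElement_top.1 hu).of_le le_top hQ)⟩
  by_cases hiso : Nonempty (Q ≃ₗ[R] M)
  · exact ⟨α, le_rfl, h.of_equiv hiso.some.symm⟩
  · obtain ⟨β, hβ, hQ'⟩ := hsub Q hQ hiso
    exact ⟨β, hβ.le, hQ'⟩

theorem isNoetherian_of_forall_ne_bot_equiv
    (h : ∀ X : Submodule R M, X ≠ ⊥ → Nonempty (X ≃ₗ[R] M)) : IsNoetherian R M := by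
  refine ⟨fun X => ?_⟩
  rcases eq_or_ne X ⊥ with rfl | hX
  · exact Submodule.fg_bot
  obtain ⟨y, -, hy⟩ := X.ne_bot_iff.1 hX
  have : Module.Finite R M :=
    Module.Finite.equiv (h _ (Submodule.span_singleton_eq_bot.not.2 hy)).some
  exact Module.Finite.iff_fg.1 (Module.Finite.equiv (h X hX).some.symm)

theorem HasCUDim.exists_isUniformElement_le (h : HasCUDim R M) {P : Submodule R M}
    (hP : P ≠ ⊥) : ∃ U ≤ P, IsUniformElement U := by
  obtain ⟨α, hα⟩ := h
  let S : Set Ordinal.{v} := {β | ∃ Q ≤ P, Q ≠ ⊥ ∧ ModuleZeta R β Q}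
  have hS : S.Nonempty :=
    let ⟨β, _, hβ⟩ := hα.exists_le_submodule hP
    ⟨β, P, le_rfl, hP, hβ⟩
  obtain ⟨Q, hQP, hQ0, hQ⟩ := csInf_mem hS
  rw [ModuleZeta] at hQ
  rcases hQ with ⟨-, hu⟩ | ⟨-, hsub⟩
  · exact ⟨Q, hQP, isUniformModule_submodule_iff.1 hu⟩
  -- by minimality of `sInf S`, every nonzero submodule of `Q` is isomorphic to `Q`
  have : IsNoetherian R Q := isNoetherian_of_forall_ne_bot_equiv fun X hX => by
    by_contra hiso
    obtain ⟨β, hβ, hζX⟩ := hsub X hX hiso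
    let eX := Submodule.equivMapOfInjective _ Q.injective_subtype X
    refine (csInf_le' (s := S) ⟨X.map Q.subtype, (Submodule.map_subtype_le _ _).trans hQP, ?_,
      hζX.of_equiv eX⟩).not_gt hβ
    exact Submodule.map_ne_bot_of_injective Q.injective_subtype hX
  have : Nontrivial Q := Submodule.nontrivial_iff_ne_bot.2 hQ0
  obtain ⟨U, -, hU⟩ := _root_.exists_isUniformElement_le (top_ne_bot : (⊤ : Submodule R Q) ≠ ⊥)
  refine ⟨U.map Q.subtype, (Submodule.map_subtype_le _ _).trans hQP, ?_⟩
  exact isUniformModule_submodule_iff.1 ((isUniformModule_submodule_iff.2 hU).of_equiv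
    (Submodule.equivMapOfInjective _ Q.injective_subtype U))

theorem iSupIndep_comap_subtype {ι : Type*} {C : Submodule R M} {X : ι → Submodule R M}
    (hX : iSupIndep X) (hXC : ∀ i, X i ≤ C) : iSupIndep fun i => (X i).comap C.subtype := by
  rw [← iSupIndep_map_orderIso_iff C.mapIic]
  refine iSupIndep.of_coe_Iic_comp ?_
  convert hX using 1
  ext i : 1
  simp [Submodule.map_comap_subtype, hXC i]

theorem ModuleZeta.not_iSupIndep : ∀ {n : ℕ} {α : Ordinal.{v}} {M : Type v} [AddCommGroup M]
    [Module R M], ModuleZeta R α M → α ≤ n →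
    ∀ {V : Fin (n + 1) → Submodule R M}, (∀ i, V i ≠ ⊥) → ¬iSupIndep V
  | 0, _, _, _, _, h, hα, _, _, _ => by simpa using h.one_le.trans hα
  | n + 1, α, M, _, _, h, hα, V, hV0, hV => by
    choose W hWV hW using fun i => HasCUDim.exists_isUniformElement_le ⟨α, h⟩ (hV0 i)
    have hWind : iSupIndep W := hV.mono hWV
    have hW0 : ∀ i, W i ≠ ⊥ := fun i => (hW i).1
    let C := ⨆ i : Fin (n + 1), W i.succ
    rw [ModuleZeta] at h
    rcases h with ⟨-, hu⟩ | ⟨-, hsub⟩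
    · exact (isUniformModule_iff_isUniformElement_top.1 hu).not_disjoint le_top le_top
        (hW0 0) (hW0 1) (hWind.pairwiseDisjoint (by simp))
    by_cases hiso : Nonempty (C ≃ₗ[R] M)
    · -- along `M ≅ C`, `W` becomes `n + 2` independent submodules of a sum of `n + 1` uniforms
      obtain ⟨φ⟩ := hiso
      let f := C.subtype ∘ₗ φ.symm.toLinearMap
      have hf : Function.Injective f := C.injective_subtype.comp φ.symm.injective
      exact not_iSupIndep_of_isEssentialIn_iSup (hWind.comp (Fin.succ_injective _))
        (fun i => hW _) (isEssentialIn_refl C) (v := fun i => (W i).map f)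
        (fun i => Submodule.map_ne_bot_of_injective hf (hW0 i))
        (fun i => Submodule.map_le_iff_le_comap.2 fun x _ => (φ.symm x).2)
        (f.iSupIndep_map hf hWind)
    · have hWC : ∀ i : Fin (n + 1), W i.succ ≤ C := le_iSup (fun i : Fin (n + 1) => W i.succ)
      obtain ⟨β, hβ, hC⟩ := hsub C (ne_bot_of_le_ne_bot (hW0 1) (hWC 0)) hiso
      refine ModuleZeta.not_iSupIndep hC (Order.lt_add_one_iff.1 (by simpa using hβ.trans_le hα))
        (V := fun i => (W i.succ).comap C.subtype) (fun i => ?_)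
        (iSupIndep_comap_subtype (hWind.comp (Fin.succ_injective _)) hWC)
      rw [Ne, ← Submodule.disjoint_iff_comap_eq_bot]
      exact fun hd => hW0 _ (hd.symm.eq_bot_of_le (hWC i))

end Module

/-- A module of finite couniserial dimension `n` has finite uniform dimension
`m ≤ n`. -/
theorem stmt3 (R : Type u) [Ring R] (M : Type v) [AddCommGroup M] [Module R M] (n : ℕ)
    (h : HasCUDim R M) (hn : cuDim R M = (n : Ordinal.{v})) :
    ∃ m : ℕ, m ≤ n ∧ HasFiniteUniformDim R M m := by
  have hbound : ∀ V : Fin (n + 1) → Submodule R M, (∀ i, V i ≠ ⊥) → ¬iSupIndep V := by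
    intro V hV0
    have hM : ¬Subsingleton M := fun _ => hV0 0 Submodule.eq_bot_of_subsingleton
    have hζ : ModuleZeta R n M := by
      rw [← hn, cuDim, if_neg hM]
      exact csInf_mem h
    exact hζ.not_iSupIndep le_rfl hV0
  obtain ⟨m, hmn, U, hU, hUuni, hess⟩ := exists_iSupIndep_isUniformElement_isEssentialIn_top
    (fun P hP => h.exists_isUniformElement_le hP) hbound
  exact ⟨m, hmn, U, hU, fun i => isUniformModule_submodule_iff.2 (hUuni i),
    fun K hK => mt disjoint_iff.2 (hess.2 K le_top hK)⟩
end

section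
/- If M is a nonzero Dedekind finite right R-module that has couniserial dimension, then M is a finite direct sum of indecomposable submodules. -/
/-! Induct on the ordinal `α` with `M ∈ ζ_α`. If `M` is not indecomposable, write
`M = A ⊕ B` with `A, B ≠ 0`. Dedekind finiteness forbids `A ≅ M` (the complement `B` would
vanish), so `A ∈ ζ_β` for some `β < α`, and likewise for `B`. Direct summands of a Dedekind
finite module are Dedekind finite, so the induction hypothesis decomposes `A` and `B`, and the
two decompositions together decompose `M`. The base case needs no separate treatment, since
uniform modules are indecomposable. -/

universe u v w

section

variable {R : Type u} [Ring R] {M M' : Type v} [AddCommGroup M] [Module R M]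
  [AddCommGroup M'] [Module R M']

theorem IsIndecomposableModule.congr (e : M ≃ₗ[R] M') (h : IsIndecomposableModule R M) :
    IsIndecomposableModule R M' := by
  have := h.1
  let o := (Submodule.orderIsoMapComap e).symm
  exact ⟨e.injective.nontrivial, fun A B hAB =>
    (h.2 (o A) (o B) (o.isCompl hAB)).imp (map_eq_bot_iff o).mp (map_eq_bot_iff o).mp⟩

theorem IsUniformModule.isIndecomposableModule (h : IsUniformModule R M) :
    IsIndecomposableModule R M :=
  ⟨h.1, fun A B hAB => by
    by_contra! hne
    exact h.2 A B hne.1 hne.2 hAB.inf_eq_bot⟩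

theorem isCompl_sup_of_isCompl_of_sup_eq {α : Type*} [Lattice α] [BoundedOrder α]
    [IsModularLattice α] {A B X Y : α} (hAB : IsCompl A B) (hXY : Disjoint X Y)
    (hA : X ⊔ Y = A) : IsCompl (X ⊔ B) Y := by
  refine ⟨(hXY.symm.disjoint_sup_right_of_disjoint_sup_left ?_).symm, ?_⟩
  · rw [sup_comm, hA]; exact hAB.disjoint
  · rw [codisjoint_iff, sup_right_comm, hA, hAB.sup_eq_top]

noncomputable def Submodule.prodEquivSupOfDisjoint {P Q : Submodule R M} (h : Disjoint P Q) :
    (P × Q) ≃ₗ[R] ↥(P ⊔ Q) :=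
  (LinearEquiv.ofInjective (P.subtype.coprod Q.subtype) (LinearMap.ker_eq_bot.mp (by
    rw [LinearMap.ker_coprod_of_disjoint_range _ _ (by simpa using h), Submodule.ker_subtype,
      Submodule.ker_subtype, Submodule.prod_bot]))).trans
    (LinearEquiv.ofEq _ _ (Submodule.sup_eq_range P Q).symm)

theorem IsDedekindFiniteModule.of_isCompl (hdf : IsDedekindFiniteModule R M)
    {A B : Submodule R M} (hAB : IsCompl A B) : IsDedekindFiniteModule R A := by
  intro A₁ C hA₁C ⟨e⟩
  have hinj := A.injective_subtype
  have hsplit : IsCompl (A₁.map A.subtype ⊔ B) (C.map A.subtype) :=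
    isCompl_sup_of_isCompl_of_sup_eq hAB (Submodule.disjoint_map hinj hA₁C.disjoint)
      (by rw [← Submodule.map_sup, hA₁C.sup_eq_top, Submodule.map_top, Submodule.range_subtype])
  have e' : M ≃ₗ[R] ↥(A₁.map A.subtype ⊔ B) :=
    (Submodule.prodEquivOfIsCompl A B hAB).symm ≪≫ₗ
      (e ≪≫ₗ A₁.equivMapOfInjective _ hinj).prodCongr (LinearEquiv.refl R B) ≪≫ₗ
      Submodule.prodEquivSupOfDisjoint
        (hAB.disjoint.mono_left (Submodule.map_subtype_le A A₁))
  exact ((Submodule.map_injective_of_injective hinj).eq_iff' (Submodule.map_bot _)).mp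
    (hdf _ _ hsplit ⟨e'⟩)

def Submodule.IsFiniteSumOfIndecomposables (P : Submodule R M) : Prop :=
  ∃ s : Finset (Submodule R M), s.SupIndep id ∧ s.sup id = P ∧
    ∀ N ∈ s, IsIndecomposableModule R N

namespace Submodule.IsFiniteSumOfIndecomposables

theorem of_isIndecomposableModule {P : Submodule R M} (h : IsIndecomposableModule R P) :
    P.IsFiniteSumOfIndecomposables :=
  ⟨{P}, Finset.supIndep_singleton _ _, Finset.sup_singleton, by simpa using h⟩

theorem sup {P Q : Submodule R M} (hPQ : Disjoint P Q) (hP : P.IsFiniteSumOfIndecomposables)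
    (hQ : Q.IsFiniteSumOfIndecomposables) : (P ⊔ Q).IsFiniteSumOfIndecomposables := by
  classical
  obtain ⟨s, hs, rfl, hs'⟩ := hP
  obtain ⟨t, ht, rfl, ht'⟩ := hQ
  refine ⟨s ∪ t, hs.union ht hPQ, Finset.sup_union, ?_⟩
  simpa [or_imp, forall_and] using ⟨hs', ht'⟩

theorem map {P : Submodule R M} (hP : P.IsFiniteSumOfIndecomposables) (f : M →ₗ[R] M')
    (hf : Function.Injective f) : (P.map f).IsFiniteSumOfIndecomposables := by
  obtain ⟨s, hs, rfl, hs'⟩ := hP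
  refine ⟨s.map ⟨Submodule.map f, Submodule.map_injective_of_injective hf⟩, ?_, ?_, ?_⟩
  · rw [Finset.supIndep_map]
    exact (f.iSupIndep_map hf hs.independent).supIndep
  · rw [Finset.sup_map]
    exact (Finset.apply_sup_eq_sup_comp _ (fun _ _ => Submodule.map_sup _ _ f)
      (Submodule.map_bot f)).symm
  · simp only [Finset.mem_map, Function.Embedding.coeFn_mk, forall_exists_index, and_imp,
      forall_apply_eq_imp_iff₂]
    exact fun N hN => (hs' N hN).congr (N.equivMapOfInjective f hf)

theorem exists_isInternal (h : (⊤ : Submodule R M).IsFiniteSumOfIndecomposables) :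
    ∃ (n : ℕ) (N : Fin n → Submodule R M),
      DirectSum.IsInternal N ∧ ∀ i, IsIndecomposableModule R (N i) := by
  obtain ⟨s, hs, hsup, hs'⟩ := h
  refine ⟨s.card, fun i => s.equivFin.symm i, ?_, fun i => hs' _ (s.equivFin.symm i).2⟩
  rw [DirectSum.isInternal_submodule_iff_iSupIndep_and_iSup_eq_top]
  refine ⟨hs.independent.comp s.equivFin.symm.injective, ?_⟩
  rw [← hsup, Finset.sup_eq_iSup, iSup_subtype']
  exact s.equivFin.symm.iSup_comp (g := fun N : s => (N : Submodule R M))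

end Submodule.IsFiniteSumOfIndecomposables

end

theorem isFiniteSumOfIndecomposables_top_of_moduleZeta {R : Type u} [Ring R] (α : Ordinal.{v})
    (M : Type v) [AddCommGroup M] [Module R M] [Nontrivial M] (hdf : IsDedekindFiniteModule R M)
    (hz : ModuleZeta R α M) : (⊤ : Submodule R M).IsFiniteSumOfIndecomposables := by
  induction α using WellFoundedLT.induction generalizing M with
  | _ α ih =>
  by_cases hind : IsIndecomposableModule R M
  · exact .of_isIndecomposableModule (hind.congr Submodule.topEquiv.symm)
  obtain ⟨A, B, hAB, hA, hB⟩ : ∃ A B : Submodule R M, IsCompl A B ∧ A ≠ ⊥ ∧ B ≠ ⊥ := by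
    simpa using not_and.mp hind inferInstance
  rw [ModuleZeta] at hz
  obtain ⟨-, hu⟩ | ⟨-, hz⟩ := hz
  · exact absurd hu.isIndecomposableModule hind
  have summand (P Q : Submodule R M) (hPQ : IsCompl P Q) (hP : P ≠ ⊥) (hQ : Q ≠ ⊥) :
      P.IsFiniteSumOfIndecomposables := by
    obtain ⟨β, hβ, hzP⟩ := hz P hP fun ⟨e⟩ => hQ (hdf P Q hPQ ⟨e.symm⟩)
    have := Submodule.nontrivial_iff_ne_bot.mpr hP
    simpa using (ih β hβ P (hdf.of_isCompl hPQ) hzP).map P.subtype P.injective_subtype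
  rw [← hAB.sup_eq_top]
  exact .sup hAB.disjoint (summand A B hAB hA hB) (summand B A hAB.symm hB hA)

/-- A nonzero Dedekind finite module with couniserial dimension is a finite
direct sum of indecomposable submodules. -/
theorem stmt11 (R : Type u) [Ring R] (M : Type v) [AddCommGroup M] [Module R M] [Nontrivial M]
    (hdf : IsDedekindFiniteModule R M) (h : HasCUDim R M) :
    ∃ (n : ℕ) (N : Fin n → Submodule R M),
      DirectSum.IsInternal N ∧ ∀ i, IsIndecomposableModule R (N i) := by
  obtain ⟨α, hz⟩ := h
  exact (isFiniteSumOfIndecomposables_top_of_moduleZeta α M hdf hz).exists_isInternal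
end

section
/- Let R be a Dedekind finite von Neumann regular ring (in particular, any unit regular ring) such that R, as a right R-module, has couniserial dimension. Then R is a semisimple artinian ring. -/
universe u v w

/-! `Module R R` is the left regular module, so the argument runs with left ideals. If some left
ideal `I` is not of the form `R e` with `e` idempotent, von Neumann regularity enlarges every
idempotent `e` with `R e ≤ I` to an idempotent `e' ≠ e` with `e e' = e' e = e` and `R e' ≤ I`,
giving a strictly increasing chain of idempotents `sₙ`. The left ideals `R (1 - sₙ)` then form a
strictly decreasing chain of nonzero submodules, and since the `ζ`-rank cannot drop forever, some
`R (1 - sₙ)` is uniform or isomorphic to `R (1 - sₙ₊₁)`. The first is impossible since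
`R (sₙ₊₁ - sₙ)` and `R (1 - sₙ₊₁)` are independent inside it, the second contradicts Dedekind
finiteness. Hence every left ideal is a direct summand. -/

section CouniserialDimension

open Submodule

variable {R : Type u} [Ring R] {M N : Type v} [AddCommGroup M] [Module R M]
  [AddCommGroup N] [Module R N]

theorem IsUniformModule.of_injective [Nontrivial M] (hN : IsUniformModule R N)
    {f : M →ₗ[R] N} (hf : Function.Injective f) : IsUniformModule R M := by
  refine ⟨‹_›, fun K₁ K₂ hK₁ hK₂ hK => ?_⟩
  have map_ne_bot : ∀ K : Submodule R M, K ≠ ⊥ → K.map f ≠ ⊥ := fun K hK h =>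
    hK (map_injective_of_injective hf (h.trans (Submodule.map_bot f).symm))
  exact hN.2 _ _ (map_ne_bot K₁ hK₁) (map_ne_bot K₂ hK₂) (by
    rw [← map_inf f hf, hK, Submodule.map_bot])

theorem Submodule.comap_subtype_ne_bot {P A : Submodule R M} (hA : A ≤ P) (hA₀ : A ≠ ⊥) :
    A.comap P.subtype ≠ ⊥ := fun h =>
  hA₀ ((disjoint_iff_comap_eq_bot.mpr h).symm.eq_bot_of_le hA)

theorem IsUniformModule.inf_ne_bot_of_le {P A B : Submodule R M} (hP : IsUniformModule R P)
    (hA : A ≤ P) (hB : B ≤ P) (hA₀ : A ≠ ⊥) (hB₀ : B ≠ ⊥) : A ⊓ B ≠ ⊥ := fun h =>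
  hP.2 _ _ (comap_subtype_ne_bot hA hA₀) (comap_subtype_ne_bot hB hB₀) (by
    rw [← comap_inf, h, comap_bot, ker_subtype])

theorem ModuleZeta.of_linearEquiv {α : Ordinal.{v}} (e : M ≃ₗ[R] N) (h : ModuleZeta R α M) :
    ModuleZeta R α N := by
  induction α using WellFoundedLT.induction generalizing M N with
  | _ α ih =>
    rw [ModuleZeta] at h ⊢
    rcases h with ⟨rfl, hu⟩ | ⟨hα, hsub⟩
    · have := hu.1
      have := e.symm.toEquiv.nontrivial
      exact Or.inl ⟨rfl, hu.of_injective e.symm.injective⟩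
    · refine Or.inr ⟨hα, fun K hK hKN => ?_⟩
      have eK := e.symm.submoduleMap K
      obtain ⟨β, hβ, hζ⟩ := hsub _ (Submodule.map_eq_bot_iff.not.mpr hK)
        fun ⟨f⟩ => hKN ⟨(eK.trans f).trans e⟩
      exact ⟨β, hβ, ih β hβ eK.symm hζ⟩

theorem moduleZeta_two_of_subsingleton [Subsingleton M] : ModuleZeta R 2 M := by
  rw [ModuleZeta]
  exact Or.inr ⟨one_lt_two, fun N hN _ => absurd (Subsingleton.elim N ⊥) hN⟩

theorem ModuleZeta.exists_lt {α : Ordinal.{v}} (h : ModuleZeta R α M)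
    (hM : ¬IsUniformModule R M) {K : Submodule R M} (hK : K ≠ ⊥)
    (hKM : IsEmpty (K ≃ₗ[R] M)) : ∃ β < α, ModuleZeta R β K := by
  rw [ModuleZeta] at h
  rcases h with ⟨-, hu⟩ | ⟨-, hsub⟩
  · exact absurd hu hM
  · obtain ⟨β, hβ, hζ⟩ := hsub K hK (not_nonempty_iff.mpr hKM)
    exact ⟨β, hβ, hζ⟩

theorem HasCUDim.submodule (h : HasCUDim R M) (K : Submodule R M) : HasCUDim R K := by
  obtain ⟨α, hα⟩ := h
  by_cases hK : K = ⊥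
  · subst hK
    exact ⟨2, moduleZeta_two_of_subsingleton⟩
  rcases isEmpty_or_nonempty (K ≃ₗ[R] M) with hKM | ⟨⟨e⟩⟩
  · by_cases hM : IsUniformModule R M
    · have := nontrivial_iff_ne_bot.mpr hK
      refine ⟨1, ?_⟩
      rw [ModuleZeta]
      exact Or.inl ⟨rfl, hM.of_injective K.injective_subtype⟩
    · obtain ⟨β, -, hζ⟩ := hα.exists_lt hM hK hKM
      exact ⟨β, hζ⟩
  · exact ⟨α, hα.of_linearEquiv e.symm⟩

theorem HasCUDim.exists_isUniformModule_or_linearEquiv (h : HasCUDim R M)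
    {K : ℕ → Submodule R M} (hK : Antitone K) (hK₀ : ∀ n, K n ≠ ⊥) :
    ∃ n, IsUniformModule R (K n) ∨ Nonempty (K (n + 1) ≃ₗ[R] K n) := by
  by_contra! hcon
  suffices ∀ α n, ¬ModuleZeta R α (K n) from
    let ⟨α, hα⟩ := h.submodule (K 0); this α 0 hα
  intro α
  induction α using WellFoundedLT.induction with
  | _ α ih =>
    intro n hα
    have hle : K (n + 1) ≤ K n := hK n.le_succ
    let e := comapSubtypeEquivOfLe hle
    obtain ⟨β, hβ, hζ⟩ := hα.exists_lt (hcon n).1 (comap_subtype_ne_bot hle (hK₀ _))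
      ⟨fun f => (hcon n).2.false (e.symm.trans f)⟩
    exact ih β hβ (n + 1) (hζ.of_linearEquiv e)

end CouniserialDimension

section Idempotents

open Submodule

variable {R : Type u} [Ring R]

theorem IsIdempotentElem.mem_span_singleton_iff {e x : R} (he : IsIdempotentElem e) :
    x ∈ R ∙ e ↔ x * e = x := by
  refine ⟨fun hx => ?_, fun hx => mem_span_singleton.mpr ⟨x, hx⟩⟩
  obtain ⟨r, rfl⟩ := mem_span_singleton.mp hx
  rw [smul_eq_mul, mul_assoc, he.eq]

theorem IsIdempotentElem.linearMap_apply {M : Type v} [AddCommGroup M] [Module R M] {e : R}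
    (he : IsIdempotentElem e) (f : (R ∙ e) →ₗ[R] M) (x : R ∙ e) :
    f x = (x : R) • f ⟨e, mem_span_singleton_self e⟩ := by
  rw [← map_smul]
  congr
  exact Subtype.ext (he.mem_span_singleton_iff.mp x.2).symm

theorem disjoint_span_singleton_sub {p q : R} (hq : IsIdempotentElem q) (hpq : p * q = q) :
    Disjoint (R ∙ (p - q)) (R ∙ q) := by
  rw [disjoint_def]
  rintro _ hx hxq
  obtain ⟨r, rfl⟩ := mem_span_singleton.mp hx
  rw [← hq.mem_span_singleton_iff.mp hxq, smul_eq_mul, mul_assoc, sub_mul, hpq, hq.eq, sub_self,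
    mul_zero]

theorem IsIdempotentElem.eq_of_linearEquiv [IsDedekindFiniteMonoid R] {p q : R}
    (hp : IsIdempotentElem p) (hq : IsIdempotentElem q) (hpq : p * q = q) (hqp : q * p = q)
    (θ : (R ∙ q) ≃ₗ[R] (R ∙ p)) : p = q := by
  let p' : R ∙ p := ⟨p, mem_span_singleton_self p⟩
  let q' : R ∙ q := ⟨q, mem_span_singleton_self q⟩
  -- `θ` and `θ⁻¹` are right multiplications by `u` and `v`
  set u : R := (θ q' : R)
  set v : R := (θ.symm p' : R)
  have hup : u * p = u := hp.mem_span_singleton_iff.mp (θ q').2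
  have hvq : v * q = v := hq.mem_span_singleton_iff.mp (θ.symm p').2
  have hqu : q * u = u := by
    simpa using (congrArg Subtype.val (hq.linearMap_apply θ.toLinearMap q')).symm
  have hpv : p * v = v := by
    simpa using (congrArg Subtype.val (hp.linearMap_apply θ.symm.toLinearMap p')).symm
  have hvu : v * u = p := by
    simpa using (congrArg Subtype.val (hq.linearMap_apply θ.toLinearMap (θ.symm p'))).symm
  have huv : u * v = q := by
    simpa using (congrArg Subtype.val (hp.linearMap_apply θ.symm.toLinearMap (θ q'))).symm
  have hpu : p * u = u := by rw [← hqu, ← mul_assoc, hpq]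
  have hvp : v * p = v := by rw [← hvq, mul_assoc, hqp]
  have hab : (1 - p + v) * (1 - p + u) = 1 := by
    have : (1 - p + v) * (1 - p + u) = 1 - p - p + p * p + u - p * u + v - v * p + v * u := by
      noncomm_ring
    rw [this, hp.eq, hpu, hvp, hvu]
    abel
  have hba : (1 - p + u) * (1 - p + v) = 1 - p + q := by
    have : (1 - p + u) * (1 - p + v) = 1 - p - p + p * p + v - p * v + u - u * p + u * v := by
      noncomm_ring
    rw [this, hp.eq, hpv, hup, huv]
    abel
  rw [mul_eq_one_symm hab] at hba
  exact sub_eq_zero.mp ((by abel : p - q = 1 - (1 - p + q)).trans (sub_eq_zero.mpr hba))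

theorem Submodule.sup_span_singleton_sub {M : Type v} [AddCommGroup M] [Module R M]
    {p : Submodule R M} {x y : M} (hy : y ∈ p) : p ⊔ R ∙ (x - y) = p ⊔ R ∙ x := by
  have key : ∀ {a b : M}, b ∈ p → p ⊔ R ∙ (a - b) ≤ p ⊔ R ∙ a := fun hb =>
    sup_le le_sup_left ((span_singleton_le_iff_mem _ _).mpr
      (sub_mem (mem_sup_right (mem_span_singleton_self _)) (mem_sup_left hb)))
  refine le_antisymm (key hy) ?_
  simpa using key (a := x - y) (neg_mem hy)

theorem IsIdempotentElem.span_singleton_add_sub_mul {e f : R} (he : IsIdempotentElem e)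
    (hf : IsIdempotentElem f) (hfe : f * e = 0) :
    IsIdempotentElem (e + f - e * f) ∧ e * (e + f - e * f) = e ∧ (e + f - e * f) * e = e ∧
      R ∙ (e + f - e * f) = R ∙ e ⊔ R ∙ f := by
  have expand : ∀ a : R, a * (e + f - e * f) = a * e + a * f - a * e * f := fun a => by
    noncomm_ring
  have hee' : e * (e + f - e * f) = e := by rw [expand, he.eq, add_sub_cancel_right]
  have hfe' : f * (e + f - e * f) = f := by rw [expand, hfe, hf.eq, zero_mul, zero_add, sub_zero]
  refine ⟨?_, hee', ?_, le_antisymm ?_ (sup_le ?_ ?_)⟩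
  · rw [IsIdempotentElem, sub_mul, add_mul, mul_assoc e f, hee', hfe']
  · rw [sub_mul, add_mul, he.eq, hfe, mul_assoc, hfe, mul_zero, add_zero, sub_zero]
  · rw [span_singleton_le_iff_mem]
    refine sub_mem (add_mem ?_ ?_) ?_
    · exact mem_sup_left (mem_span_singleton_self e)
    · exact mem_sup_right (mem_span_singleton_self f)
    · exact mem_sup_right (smul_mem _ e (mem_span_singleton_self f))
  · exact (span_singleton_le_iff_mem _ _).mpr (mem_span_singleton.mpr ⟨e, hee'⟩)
  · exact (span_singleton_le_iff_mem _ _).mpr (mem_span_singleton.mpr ⟨f, hfe'⟩)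

theorem exists_isIdempotentElem_span_eq_sup (hvnr : ∀ x : R, ∃ y, x * y * x = x) {e : R}
    (he : IsIdempotentElem e) (x : R) :
    ∃ e', IsIdempotentElem e' ∧ e * e' = e ∧ e' * e = e ∧ R ∙ e' = R ∙ e ⊔ R ∙ x := by
  obtain ⟨c, hc⟩ := hvnr (x - x * e)
  set z := x - x * e
  have hze : z * e = 0 := by rw [sub_mul, mul_assoc, he.eq, sub_self]
  have hf : IsIdempotentElem (c * z) := by rw [IsIdempotentElem, mul_assoc, ← mul_assoc z, hc]
  have hfe : c * z * e = 0 := by rw [mul_assoc, hze, mul_zero]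
  have hspan : R ∙ (c * z) = R ∙ z := le_antisymm
    ((span_singleton_le_iff_mem _ _).mpr (smul_mem _ c (mem_span_singleton_self z)))
    ((span_singleton_le_iff_mem _ _).mpr
      (mem_span_singleton.mpr ⟨z, by rw [smul_eq_mul, ← mul_assoc, hc]⟩))
  obtain ⟨hidem, hee', he'e, hsup⟩ := he.span_singleton_add_sub_mul hf hfe
  refine ⟨_, hidem, hee', he'e, ?_⟩
  rw [hsup, hspan]
  exact sup_span_singleton_sub (smul_mem _ x (mem_span_singleton_self e))

theorem HasCUDim.exists_succ_eq_of_isIdempotentElem [IsDedekindFiniteMonoid R]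
    (h : HasCUDim R R) {s : ℕ → R} (hs : ∀ n, IsIdempotentElem (s n))
    (hmul : ∀ n, s n * s (n + 1) = s n) (hmul' : ∀ n, s (n + 1) * s n = s n) :
    ∃ n, s (n + 1) = s n := by
  by_contra! hne
  set p := fun n => 1 - s n
  have hp : ∀ n, IsIdempotentElem (p n) := fun n => (hs n).one_sub
  have expand : ∀ a b : R, (1 - a) * (1 - b) = 1 - b - a + a * b := fun a b => by noncomm_ring
  have hpp : ∀ n, p n * p (n + 1) = p (n + 1) := fun n => by
    simp only [p, expand, hmul, sub_add_cancel]
  have hpp' : ∀ n, p (n + 1) * p n = p (n + 1) := fun n => by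
    simp only [p, expand, hmul']
    abel
  have hpne : ∀ n, p n ≠ p (n + 1) := fun n h => hne n (sub_right_injective h).symm
  have hp₀ : ∀ n, p n ≠ 0 := fun n h₀ => hpne n (by rw [← hpp' n, h₀, mul_zero])
  have hle : ∀ n, p (n + 1) ∈ R ∙ p n := fun n => (hp n).mem_span_singleton_iff.mpr (hpp' n)
  obtain ⟨n, hu | ⟨⟨θ⟩⟩⟩ := h.exists_isUniformModule_or_linearEquiv
    (antitone_nat_of_succ_le fun n => (span_singleton_le_iff_mem _ _).mpr (hle n))
    (fun n => span_singleton_eq_bot.not.mpr (hp₀ n))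
  · refine hu.inf_ne_bot_of_le ?_ ?_ ?_ ?_ (disjoint_span_singleton_sub (hp _) (hpp n)).eq_bot
    · exact (span_singleton_le_iff_mem _ _).mpr (sub_mem (mem_span_singleton_self _) (hle n))
    · exact (span_singleton_le_iff_mem _ _).mpr (hle n)
    · exact span_singleton_eq_bot.not.mpr (sub_ne_zero.mpr (hpne n))
    · exact span_singleton_eq_bot.not.mpr (hp₀ (n + 1))
  · exact hpne n ((hp n).eq_of_linearEquiv (hp (n + 1)) (hpp n) (hpp' n) θ)

theorem HasCUDim.exists_isIdempotentElem_eq_span_singleton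
    (hvnr : ∀ x : R, ∃ y, x * y * x = x) [IsDedekindFiniteMonoid R] (h : HasCUDim R R)
    (I : Submodule R R) : ∃ e, IsIdempotentElem e ∧ I = R ∙ e := by
  by_contra! hI
  let T := {e : R // IsIdempotentElem e ∧ R ∙ e ≤ I}
  have step : ∀ t : T, ∃ t' : T, t.1 * t'.1 = t.1 ∧ t'.1 * t.1 = t.1 ∧ t'.1 ≠ t.1 := by
    rintro ⟨e, he, heI⟩
    obtain ⟨x, hxI, hx⟩ := SetLike.exists_of_lt (heI.lt_of_ne (hI e he).symm)
    obtain ⟨e', he', hee', he'e, hspan⟩ := exists_isIdempotentElem_span_eq_sup hvnr he x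
    refine ⟨⟨e', he', hspan ▸ sup_le heI ((span_singleton_le_iff_mem _ _).mpr hxI)⟩,
      hee', he'e, fun heq => hx ?_⟩
    rw [← show e' = e from heq, hspan]
    exact mem_sup_right (mem_span_singleton_self x)
  choose F hF using step
  let s : ℕ → T := fun n => F^[n] ⟨0, .zero, by simp⟩
  have hs : ∀ n, s (n + 1) = F (s n) := fun n => Function.iterate_succ_apply' F n _
  obtain ⟨n, hn⟩ := h.exists_succ_eq_of_isIdempotentElem (s := fun n => (s n).1)
    (fun n => (s n).2.1) (fun n => hs n ▸ (hF (s n)).1) (fun n => hs n ▸ (hF (s n)).2.1)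
  exact (hF (s n)).2.2 (hs n ▸ hn)

theorem isSemisimpleRing_of_forall_eq_span_singleton_idempotent
    (h : ∀ I : Ideal R, ∃ e, IsIdempotentElem e ∧ I = R ∙ e) : IsSemisimpleRing R where
  exists_isCompl I := by
    obtain ⟨e, he, rfl⟩ := h I
    rw [← LinearMap.range_toSpanSingleton]
    exact ⟨_, LinearMap.IsIdempotentElem.isCompl
      (LinearMap.toSpanSingleton_isIdempotentElem_iff.mpr he)⟩

end Idempotents

/-- A Dedekind finite von Neumann regular ring with couniserial dimension (as
a module over itself) is semisimple artinian. -/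
theorem stmt12 (R : Type u) [Ring R]
    (hvnr : ∀ x : R, ∃ y : R, x * y * x = x)
    (hdf : ∀ x y : R, x * y = 1 → y * x = 1)
    (h : HasCUDim R R) :
    IsSemisimpleRing R := by
  have : IsDedekindFiniteMonoid R := ⟨hdf _ _⟩
  exact isSemisimpleRing_of_forall_eq_span_singleton_idempotent
    (h.exists_isIdempotentElem_eq_span_singleton hvnr)
end
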